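/- Let $f : \Omega \to [0, \infty)$ be measurable on a measure space $(\Omega, \mu)$ with $\mu(\Omega) < \infty$, let $M > 1$, $\delta_0 > 0$, and $\theta \in (0,1)$, and suppose that for every integer $k \ge 1$, $\mu(\{f \ge M^k\}) \le \delta_0\, \theta^k\, \mu(\Omega)$. Then for every $\zeta > 0$ with $M^\zeta \theta < 1$, $\int_\Omega f^\zeta \, d\mu \le \mu(\Omega)\left( M^\zeta + \delta_0 \frac{M^\zeta (M^\zeta - 1)\theta}{1 - M^\zeta \theta} \right)$; in particular $\int_\Omega f^\zeta\,d\mu < \infty$. -/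
import Mathlib


open MeasureTheory

/-- layer-cake argument: geometric decay of superlevel sets implies
`L^ζ` integrability with an explicit bound. -/
theorem layer_cake_integrability {Ω : Type*} [MeasurableSpace Ω] (μ : Measure Ω)
    [IsFiniteMeasure μ] (f : Ω → ℝ) (hf : Measurable f) (hfnn : ∀ x, 0 ≤ f x)
    (M δ₀ θ : ℝ) (hM : 1 < M) (hδ₀ : 0 < δ₀) (hθ : θ ∈ Set.Ioo (0:ℝ) 1)
    (hlevel : ∀ k : ℕ, 1 ≤ k →
      μ {x | M ^ (k : ℝ) ≤ f x} ≤ ENNReal.ofReal (δ₀ * θ ^ k) * μ Set.univ)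
    (ζ : ℝ) (hζ : 0 < ζ) (hζθ : M ^ ζ * θ < 1) :
    (∫⁻ x, ENNReal.ofReal (f x ^ ζ) ∂μ) ≤
      μ Set.univ * ENNReal.ofReal
        (M ^ ζ + δ₀ * (M ^ ζ * (M ^ ζ - 1) * θ) / (1 - M ^ ζ * θ)) := by
  obtain ⟨hθ0, hθ1⟩ := hθ
  have hM0 : (0:ℝ) < M := lt_trans zero_lt_one hM
  set a : ℝ := M ^ ζ with ha_def
  have ha1 : 1 < a := (Real.one_lt_rpow_iff_of_pos hM0).mpr (Or.inl ⟨hM, hζ⟩)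
  have ha0 : (0:ℝ) < a := lt_trans zero_lt_one ha1
  set r : ℝ := a * θ with hr_def
  have hr0 : (0:ℝ) ≤ r := by positivity
  have hr1 : r < 1 := hζθ
  -- the indicator functions
  set g : ℕ → Ω → ENNReal := fun n =>
    Set.indicator {x | M ^ (((n+1 : ℕ)) : ℝ) ≤ f x}
      (fun _ => ENNReal.ofReal (a ^ (n+2) - a ^ (n+1))) with hg_def
  have hmeas : ∀ n : ℕ, MeasurableSet {x | M ^ (((n+1 : ℕ)) : ℝ) ≤ f x} := fun n =>
    measurableSet_le measurable_const hf
  have hset : ∀ n : ℕ, {x | M ^ (((n+1 : ℕ)) : ℝ) ≤ f x} = {x | M ^ (n+1) ≤ f x} := by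
    intro n
    ext x
    rw [Set.mem_setOf_eq, Set.mem_setOf_eq, Real.rpow_natCast]
  -- pointwise bound
  have hpt : ∀ x, ENNReal.ofReal (f x ^ ζ) ≤ ENNReal.ofReal a + ∑' n, g n x := by
    intro x
    have hfx : 0 ≤ f x := hfnn x
    have hex : ∃ n : ℕ, f x < M ^ (n+1) := by
      obtain ⟨n, hn⟩ := pow_unbounded_of_one_lt (f x) hM
      exact ⟨n, hn.trans_le (pow_le_pow_right₀ hM.le (Nat.le_succ n))⟩
    set m := Nat.find hex with hm_def
    have h1 : f x < M ^ (m+1) := Nat.find_spec hex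
    have h2 : ∀ n < m, M ^ (n+1) ≤ f x := fun n hn => not_lt.1 (Nat.find_min hex hn)
    have hpow : f x ^ ζ ≤ a ^ (m+1) := by
      have hle : f x ^ ζ ≤ ((M ^ (m+1) : ℝ)) ^ ζ :=
        Real.rpow_le_rpow hfx h1.le hζ.le
      have heq : ((M ^ (m+1) : ℝ)) ^ ζ = a ^ (m+1) := by
        rw [← Real.rpow_natCast M (m+1), ← Real.rpow_natCast a (m+1), ha_def,
          ← Real.rpow_mul hM0.le, ← Real.rpow_mul hM0.le, mul_comm]
      rwa [heq] at hle
    have htel : ∑ n ∈ Finset.range m, (a ^ (n+2) - a ^ (n+1)) = a ^ (m+1) - a := by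
      have := Finset.sum_range_sub (fun n => a ^ (n+1)) m
      simpa using this
    have haa : a ≤ a ^ (m+1) := le_self_pow₀ ha1.le (by omega)
    calc ENNReal.ofReal (f x ^ ζ) ≤ ENNReal.ofReal (a ^ (m+1)) :=
          ENNReal.ofReal_le_ofReal hpow
      _ = ENNReal.ofReal (a + (a ^ (m+1) - a)) := by ring_nf
      _ = ENNReal.ofReal a + ENNReal.ofReal (a ^ (m+1) - a) :=
          ENNReal.ofReal_add ha0.le (by linarith)
      _ = ENNReal.ofReal a + ∑ n ∈ Finset.range m, ENNReal.ofReal (a ^ (n+2) - a ^ (n+1)) := by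
          rw [← htel, ENNReal.ofReal_sum_of_nonneg]
          intro n _
          have h' : a ^ (n+1) ≤ a ^ (n+2) := pow_le_pow_right₀ ha1.le (by omega)
          linarith
      _ = ENNReal.ofReal a + ∑ n ∈ Finset.range m, g n x := by
          congr 1
          refine Finset.sum_congr rfl fun n hn => ?_
          simp only [hg_def]
          rw [Set.indicator_of_mem]
          rw [hset n]
          exact h2 n (Finset.mem_range.1 hn)
      _ ≤ ENNReal.ofReal a + ∑' n, g n x := by
          gcongr
          exact ENNReal.sum_le_tsum (Finset.range m)
  -- the real geometric sum
  have hden : (0:ℝ) < 1 - r := by linarith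
  have hsummable : Summable (fun n : ℕ => (δ₀ * (a - 1)) * r ^ (n+1)) := by
    apply Summable.congr ((summable_geometric_of_lt_one hr0 hr1).mul_left (δ₀ * (a - 1) * r))
    intro n
    ring
  have hsum_real : ∑' n : ℕ, (δ₀ * (a - 1)) * r ^ (n+1)
      = δ₀ * (a * (a - 1) * θ) / (1 - r) := by
    have hgeo : ∑' n : ℕ, r ^ n = (1 - r)⁻¹ := tsum_geometric_of_lt_one hr0 hr1
    have h1 : ∑' n : ℕ, (δ₀ * (a - 1)) * r ^ (n+1)
        = ∑' n : ℕ, (δ₀ * (a - 1) * r) * r ^ n := tsum_congr fun n => by ring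
    rw [h1, tsum_mul_left, hgeo]
    field_simp
    ring
  have hS0 : 0 ≤ δ₀ * (a * (a - 1) * θ) / (1 - r) := by
    apply div_nonneg _ hden.le
    have : (0:ℝ) ≤ a - 1 := by linarith
    positivity
  -- main computation
  have hnn : ∀ n : ℕ, 0 ≤ (δ₀ * (a - 1)) * r ^ (n+1) := by
    intro n
    have : (0:ℝ) ≤ a - 1 := by linarith
    positivity
  calc ∫⁻ x, ENNReal.ofReal (f x ^ ζ) ∂μ
      ≤ ∫⁻ x, (ENNReal.ofReal a + ∑' n, g n x) ∂μ := lintegral_mono hpt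
    _ = ENNReal.ofReal a * μ Set.univ + ∑' n, ∫⁻ x, g n x ∂μ := by
        rw [lintegral_add_left measurable_const, lintegral_const,
          lintegral_tsum fun n => (measurable_const.indicator (hmeas n)).aemeasurable]
    _ ≤ ENNReal.ofReal a * μ Set.univ
        + ∑' n, ENNReal.ofReal (a ^ (n+2) - a ^ (n+1))
            * (ENNReal.ofReal (δ₀ * θ ^ (n+1)) * μ Set.univ) := by
        gcongr with n
        rw [hg_def]
        rw [lintegral_indicator_const (hmeas n)]
        gcongr
        exact hlevel (n+1) (by omega)
    _ = ENNReal.ofReal a * μ Set.univ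
        + (∑' n : ℕ, ENNReal.ofReal ((δ₀ * (a - 1)) * r ^ (n+1))) * μ Set.univ := by
        congr 1
        rw [← ENNReal.tsum_mul_right]
        refine tsum_congr fun n => ?_
        have h' : a ^ (n+1) ≤ a ^ (n+2) := pow_le_pow_right₀ ha1.le (by omega)
        rw [← mul_assoc, ← ENNReal.ofReal_mul (by linarith)]
        congr 2
        ring
    _ = ENNReal.ofReal a * μ Set.univ
        + ENNReal.ofReal (δ₀ * (a * (a - 1) * θ) / (1 - r)) * μ Set.univ := by
        rw [← ENNReal.ofReal_tsum_of_nonneg hnn hsummable, hsum_real]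
    _ = μ Set.univ * ENNReal.ofReal (a + δ₀ * (a * (a - 1) * θ) / (1 - r)) := by
        rw [← add_mul, ← ENNReal.ofReal_add ha0.le hS0, mul_comm]
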